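/- Let n ≥ 2 and let A ∈ ℝ^{n×n} be symmetric. Then A satisfies condition (M) for the Lorentz cone L if and only if there exist a, λ ∈ ℝ with λ ≥ a such that A = diag(a, λ I_{n−1}), i.e., A is the diagonal matrix with (1,1)-entry a and all other diagonal entries equal to λ. -/

import Mathlib

/-!
Write `q v = ⟪A v, v⟫`. For `A = diag(a, λ I)` one has `q v = λ ‖v‖² - (λ - a) v₀²`; if `x ⊥ y` are
unit vectors with `y ∈ L`, Bessel's inequality gives `x₀² + y₀² ≤ 1` while `y ∈ L` gives
`2 y₀² ≥ 1`, so `x₀² ≤ y₀²` and `q y ≤ q x`.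

Conversely, for a unit `u ⊥ e₀` the boundary vectors `(e₀ ± u)/√2` are orthonormal and both lie in
`L`, so (M) forces `q` to take the same value on them, whence `⟪A e₀, u⟫ = 0`. Moreover
`x = (e₀ - u)/√2` then minimises `q` among unit vectors orthogonal to `y = (e₀ + u)/√2`, and the
first-order condition along great circles through `x` gives `⟪A u, w⟫ = 0` for every `w ⊥ e₀, u`.
Thus `A` leaves `e₀ᗮ` invariant and every vector of `e₀ᗮ` is an eigenvector, so `A` is a scalar
`λ` there; testing (M) with `y = e₀` gives `a ≤ λ`.
-/

open Matrix RealInnerProductSpace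

/-- The Lorentz cone `L = {x ∈ ℝ^{n+1} : x₁ ≥ √(x₂² + ⋯ + x_{n+1}²)}`. -/
def lorentzCone (n : ℕ) : Set (EuclideanSpace ℝ (Fin (n + 1))) :=
  {x | Real.sqrt (∑ i : Fin n, x i.succ ^ 2) ≤ x 0}

/-- Condition (M): `⟨Ax,x⟩ ≥ ⟨Ay,y⟩` for all `x ∈ 𝕊` and `y ∈ K ∩ 𝕊` with `x ⊥ y`. -/
def CondM {n : ℕ} (A : Matrix (Fin n) (Fin n) ℝ) (K : Set (EuclideanSpace ℝ (Fin n))) : Prop :=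
  ∀ x y : EuclideanSpace ℝ (Fin n), ‖x‖ = 1 → y ∈ K → ‖y‖ = 1 → ⟪x, y⟫ = 0 →
    ⟪Matrix.toEuclideanLin A y, y⟫ ≤ ⟪Matrix.toEuclideanLin A x, x⟫

open Filter Topology

theorem eq_zero_of_forall_sin_mul_cos_mul_le {G P : ℝ}
    (h : ∀ θ : ℝ, Real.sin θ * Real.cos θ * G ≤ Real.sin θ ^ 2 * P) : G = 0 := by
  have nonpos : ∀ G : ℝ, (∀ θ : ℝ, Real.sin θ * Real.cos θ * G ≤ Real.sin θ ^ 2 * P) → G ≤ 0 := by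
    intro G hG
    have hlim : Tendsto (fun θ => Real.cos θ * G - Real.sin θ * P) (𝓝[>] 0) (𝓝 G) := by
      have hcont : Continuous (fun θ => Real.cos θ * G - Real.sin θ * P) := by fun_prop
      simpa using (hcont.tendsto 0).mono_left nhdsWithin_le_nhds
    refine le_of_tendsto hlim ?_
    filter_upwards [Ioo_mem_nhdsGT Real.pi_pos] with θ hθ
    have hsin := Real.sin_pos_of_pos_of_lt_pi hθ.1 hθ.2
    nlinarith [hG θ]
  refine le_antisymm (nonpos G h) (neg_nonpos.1 (nonpos (-G) fun θ => ?_))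
  simpa using h (-θ)

theorem LinearMap.IsSymmetric.inner_map_smul_add_smul {E : Type*} [NormedAddCommGroup E]
    [InnerProductSpace ℝ E] {T : E →ₗ[ℝ] E} (hT : T.IsSymmetric) (a b : ℝ) (x y : E) :
    ⟪T (a • x + b • y), a • x + b • y⟫ =
      a ^ 2 * ⟪T x, x⟫ + 2 * a * b * ⟪T x, y⟫ + b ^ 2 * ⟪T y, y⟫ := by
  have hyx : ⟪T y, x⟫ = ⟪T x, y⟫ := by rw [hT, real_inner_comm]
  simp only [map_add, map_smul, inner_add_left, inner_add_right, real_inner_smul_left,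
    real_inner_smul_right, hyx]
  ring

section Orthonormal

variable {E : Type*} [NormedAddCommGroup E] [InnerProductSpace ℝ E] {x y : E}

theorem inner_smul_add_smul_of_orthonormal (hx : ‖x‖ = 1) (hy : ‖y‖ = 1) (hxy : ⟪x, y⟫ = 0)
    (a b a' b' : ℝ) : ⟪a • x + b • y, a' • x + b' • y⟫ = a * a' + b * b' := by
  have hyx : ⟪y, x⟫ = 0 := by rwa [real_inner_comm]
  simp only [inner_add_left, inner_add_right, real_inner_smul_left, real_inner_smul_right,
    real_inner_self_eq_norm_sq, hx, hy, hxy, hyx]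
  ring

theorem norm_smul_add_smul_of_orthonormal (hx : ‖x‖ = 1) (hy : ‖y‖ = 1) (hxy : ⟪x, y⟫ = 0)
    {a b : ℝ} (hab : a ^ 2 + b ^ 2 = 1) : ‖a • x + b • y‖ = 1 := by
  rw [← pow_eq_one_iff_of_nonneg (norm_nonneg _) two_ne_zero, ← real_inner_self_eq_norm_sq,
    inner_smul_add_smul_of_orthonormal hx hy hxy, ← hab]
  ring

end Orthonormal

theorem EuclideanSpace.sq_apply_add_sq_apply_le_one {ι : Type*} [Fintype ι]
    {x y : EuclideanSpace ℝ ι} (hx : ‖x‖ = 1) (hy : ‖y‖ = 1) (hxy : ⟪x, y⟫ = 0) (i : ι) :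
    x i ^ 2 + y i ^ 2 ≤ 1 := by
  classical
  have hon : Orthonormal ℝ ![x, y] := by
    simp [orthonormal_vecCons_iff, hx, hy, hxy]
  have := hon.sum_inner_products_le (EuclideanSpace.single i (1 : ℝ)) (s := Finset.univ)
  simpa [Fin.sum_univ_two, EuclideanSpace.inner_single_right] using this

theorem inner_toEuclideanLin_single_single {m n : Type*} [Fintype m] [Fintype n] [DecidableEq m]
    [DecidableEq n] (A : Matrix m n ℝ) (i : m) (j : n) :
    ⟪toEuclideanLin A (EuclideanSpace.single j 1), EuclideanSpace.single i 1⟫ = A i j := by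
  simp [toLpLin_apply, EuclideanSpace.inner_single_right, mulVec_single]

theorem Matrix.IsSymm.isSymmetric_toEuclideanLin {m : Type*} [Fintype m] [DecidableEq m]
    {A : Matrix m m ℝ} (hA : A.IsSymm) : (toEuclideanLin A).IsSymmetric :=
  isSymmetric_toEuclideanLin_iff.2 (isHermitian_iff_isSymm.2 hA)

theorem EuclideanSpace.norm_sq_eq_sq_add_sum_succ {n : ℕ} (x : EuclideanSpace ℝ (Fin (n + 1))) :
    ‖x‖ ^ 2 = x 0 ^ 2 + ∑ i : Fin n, x i.succ ^ 2 := by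
  rw [EuclideanSpace.real_norm_sq_eq, Fin.sum_univ_succ]

theorem mem_lorentzCone_iff {n : ℕ} {x : EuclideanSpace ℝ (Fin (n + 1))} :
    x ∈ lorentzCone n ↔ 0 ≤ x 0 ∧ ‖x‖ ^ 2 ≤ 2 * x 0 ^ 2 := by
  rw [lorentzCone, Set.mem_ofPred_eq, Real.sqrt_le_iff, x.norm_sq_eq_sq_add_sum_succ]
  constructor <;> rintro ⟨h0, h⟩ <;> exact ⟨h0, by linarith⟩

theorem inner_toEuclideanLin_diagonal_ite {n : ℕ} (a lam : ℝ)
    (v : EuclideanSpace ℝ (Fin (n + 1))) :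
    ⟪toEuclideanLin (diagonal fun i : Fin (n + 1) => if i = 0 then a else lam) v, v⟫ =
      lam * ‖v‖ ^ 2 - (lam - a) * v 0 ^ 2 := by
  simp only [toLpLin_apply, PiLp.inner_apply, RCLike.inner_apply, Real.ringHom_apply,
    mulVec_diagonal, ite_mul, mul_ite, mul_left_comm, Fin.sum_univ_succ, if_true,
    Fin.succ_ne_zero, if_false, v.norm_sq_eq_sq_add_sum_succ, sq]
  rw [← Finset.mul_sum]
  ring

theorem condM_diagonal_lorentzCone {n : ℕ} {a lam : ℝ} (hal : a ≤ lam) :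
    CondM (diagonal fun i : Fin (n + 1) => if i = 0 then a else lam) (lorentzCone n) := by
  intro x y hx hyL hy hxy
  have hy0 : 1 ≤ 2 * y 0 ^ 2 := by simpa [hy] using (mem_lorentzCone_iff.1 hyL).2
  have hxy0 := EuclideanSpace.sq_apply_add_sq_apply_le_one hx hy hxy 0
  rw [inner_toEuclideanLin_diagonal_ite, inner_toEuclideanLin_diagonal_ite, hx, hy]
  nlinarith

section CondM

variable {n : ℕ} {A : Matrix (Fin n) (Fin n) ℝ} {K : Set (EuclideanSpace ℝ (Fin n))}

theorem CondM.inner_apply_eq_of_mem (hM : CondM A K) {x y : EuclideanSpace ℝ (Fin n)}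
    (hx : ‖x‖ = 1) (hy : ‖y‖ = 1) (hxK : x ∈ K) (hyK : y ∈ K) (hxy : ⟪x, y⟫ = 0) :
    ⟪toEuclideanLin A x, x⟫ = ⟪toEuclideanLin A y, y⟫ :=
  le_antisymm (hM y x hy hxK hx (by rwa [real_inner_comm])) (hM x y hx hyK hy hxy)

/-- `x` attains the lower bound `q y` of `q` on the unit vectors orthogonal to `y`, in particular
on the great circle through `x` and `w`, so the derivative `2 ⟪A x, w⟫` of `q` there vanishes. -/
theorem CondM.inner_apply_eq_zero_of_inner_apply_eq (hM : CondM A K)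
    (hT : (toEuclideanLin A).IsSymmetric) {x w y : EuclideanSpace ℝ (Fin n)}
    (hx : ‖x‖ = 1) (hw : ‖w‖ = 1) (hxw : ⟪x, w⟫ = 0) (hyK : y ∈ K) (hy : ‖y‖ = 1)
    (hxy : ⟪x, y⟫ = 0) (hwy : ⟪w, y⟫ = 0)
    (hq : ⟪toEuclideanLin A x, x⟫ = ⟪toEuclideanLin A y, y⟫) :
    ⟪toEuclideanLin A x, w⟫ = 0 := by
  set T := toEuclideanLin A
  have hcircle : ∀ θ : ℝ, Real.sin θ * Real.cos θ * (-2 * ⟪T x, w⟫) ≤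
      Real.sin θ ^ 2 * (⟪T w, w⟫ - ⟪T x, x⟫) := by
    intro θ
    have hunit : ‖Real.cos θ • x + Real.sin θ • w‖ = 1 :=
      norm_smul_add_smul_of_orthonormal hx hw hxw (Real.cos_sq_add_sin_sq θ)
    have horth : ⟪Real.cos θ • x + Real.sin θ • w, y⟫ = 0 := by
      simp [inner_add_left, real_inner_smul_left, hxy, hwy]
    have hle : ⟪T y, y⟫ ≤
        ⟪T (Real.cos θ • x + Real.sin θ • w), Real.cos θ • x + Real.sin θ • w⟫ :=
      hM _ y hunit hyK hy horth
    rw [hT.inner_map_smul_add_smul, ← hq] at hle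
    linear_combination hle + ⟪T x, x⟫ * Real.sin_sq_add_cos_sq θ
  linarith [eq_zero_of_forall_sin_mul_cos_mul_le hcircle]

end CondM

section LorentzCone

variable {n : ℕ} {A : Matrix (Fin (n + 1)) (Fin (n + 1)) ℝ}
  {u w : EuclideanSpace ℝ (Fin (n + 1))}

local notation "e₀" => EuclideanSpace.single (0 : Fin (_ + 1)) (1 : ℝ)

theorem norm_eq_one_and_mem_lorentzCone_of_sq_eq_half (hu0 : u 0 = 0) (hu : ‖u‖ = 1) {b : ℝ}
    (hb : b ^ 2 = 1 / 2) :
    ‖(√2)⁻¹ • e₀ + b • u‖ = 1 ∧ (√2)⁻¹ • e₀ + b • u ∈ lorentzCone n := by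
  have hc : (√2)⁻¹ ^ 2 = (1 / 2 : ℝ) := by simp
  have hunit : ‖(√2)⁻¹ • e₀ + b • u‖ = 1 :=
    norm_smul_add_smul_of_orthonormal (by simp) hu
      (by simp [EuclideanSpace.inner_single_left, hu0]) (by rw [hc, hb]; norm_num)
  refine ⟨hunit, mem_lorentzCone_iff.2 ⟨?_, ?_⟩⟩
  · simp [hu0]
  · simp [hunit, hu0]

theorem CondM.inner_apply_eq_of_lorentzCone_pair (hM : CondM A (lorentzCone n)) (hu0 : u 0 = 0)
    (hu : ‖u‖ = 1) :
    ⟪toEuclideanLin A ((√2)⁻¹ • e₀ + (√2)⁻¹ • u), (√2)⁻¹ • e₀ + (√2)⁻¹ • u⟫ =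
      ⟪toEuclideanLin A ((√2)⁻¹ • e₀ + -(√2)⁻¹ • u), (√2)⁻¹ • e₀ + -(√2)⁻¹ • u⟫ := by
  have hc : (√2)⁻¹ ^ 2 = (1 / 2 : ℝ) := by simp
  obtain ⟨hp, hpL⟩ := norm_eq_one_and_mem_lorentzCone_of_sq_eq_half hu0 hu hc
  obtain ⟨hm, hmL⟩ :=
    norm_eq_one_and_mem_lorentzCone_of_sq_eq_half hu0 hu (b := -(√2)⁻¹) (by simp)
  refine hM.inner_apply_eq_of_mem hp hm hpL hmL ?_
  rw [inner_smul_add_smul_of_orthonormal (by simp) hu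
    (by simp [EuclideanSpace.inner_single_left, hu0])]
  ring

theorem CondM.inner_apply_single_zero_eq_zero (hM : CondM A (lorentzCone n))
    (hT : (toEuclideanLin A).IsSymmetric) (hu0 : u 0 = 0) (hu : ‖u‖ = 1) :
    ⟪toEuclideanLin A e₀, u⟫ = 0 := by
  have heq := hM.inner_apply_eq_of_lorentzCone_pair hu0 hu
  rw [hT.inner_map_smul_add_smul, hT.inner_map_smul_add_smul] at heq
  have hc : (√2)⁻¹ ^ 2 = (1 / 2 : ℝ) := by simp
  linear_combination (1 / 2 : ℝ) * heq - 2 * ⟪toEuclideanLin A e₀, u⟫ * hc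

theorem CondM.inner_apply_eq_zero_of_orthonormal (hM : CondM A (lorentzCone n))
    (hT : (toEuclideanLin A).IsSymmetric) (hu0 : u 0 = 0) (hw0 : w 0 = 0) (hu : ‖u‖ = 1)
    (hw : ‖w‖ = 1) (huw : ⟪u, w⟫ = 0) : ⟪toEuclideanLin A u, w⟫ = 0 := by
  have hc : (√2)⁻¹ ^ 2 = (1 / 2 : ℝ) := by simp
  have he₀u : ⟪e₀, u⟫ = 0 := by simp [EuclideanSpace.inner_single_left, hu0]
  have he₀w : ⟪e₀, w⟫ = 0 := by simp [EuclideanSpace.inner_single_left, hw0]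
  obtain ⟨hp, hpL⟩ := norm_eq_one_and_mem_lorentzCone_of_sq_eq_half hu0 hu hc
  obtain ⟨hm, -⟩ :=
    norm_eq_one_and_mem_lorentzCone_of_sq_eq_half hu0 hu (b := -(√2)⁻¹) (by simp)
  have hmw : ⟪(√2)⁻¹ • e₀ + -(√2)⁻¹ • u, w⟫ = 0 := by
    simp [inner_add_left, real_inner_smul_left, he₀w, huw]
  have hwp : ⟪w, (√2)⁻¹ • e₀ + (√2)⁻¹ • u⟫ = 0 := by
    rw [real_inner_comm]
    simp [inner_add_left, real_inner_smul_left, he₀w, huw]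
  have hmp : ⟪(√2)⁻¹ • e₀ + -(√2)⁻¹ • u, (√2)⁻¹ • e₀ + (√2)⁻¹ • u⟫ = 0 := by
    rw [inner_smul_add_smul_of_orthonormal (by simp) hu he₀u]
    ring
  have hzero := hM.inner_apply_eq_zero_of_inner_apply_eq hT hm hw hmw hpL hp hmp hwp
    (hM.inner_apply_eq_of_lorentzCone_pair hu0 hu).symm
  simp only [map_add, map_smul, inner_add_left, real_inner_smul_left,
    hM.inner_apply_single_zero_eq_zero hT hw0 hw] at hzero
  simpa using hzero

theorem CondM.inner_apply_eq_zero_of_inner_eq_zero (hM : CondM A (lorentzCone n))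
    (hT : (toEuclideanLin A).IsSymmetric) (hu0 : u 0 = 0) (hw0 : w 0 = 0) (huw : ⟪u, w⟫ = 0) :
    ⟪toEuclideanLin A u, w⟫ = 0 := by
  rcases eq_or_ne u 0 with rfl | hu
  · simp
  rcases eq_or_ne w 0 with rfl | hw
  · simp
  have h := hM.inner_apply_eq_zero_of_orthonormal hT (u := ‖u‖⁻¹ • u) (w := ‖w‖⁻¹ • w)
    (by simp [hu0]) (by simp [hw0]) (norm_smul_inv_norm hu) (norm_smul_inv_norm hw)
    (by simp [real_inner_smul_left, real_inner_smul_right, huw])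
  simpa [real_inner_smul_left, real_inner_smul_right, hu, hw] using h

theorem CondM.apply_zero_eq_zero (hM : CondM A (lorentzCone n)) (hA : A.IsSymm)
    {j : Fin (n + 1)} (hj : j ≠ 0) : A 0 j = 0 := by
  rw [← hA.apply 0 j, ← inner_toEuclideanLin_single_single A j 0]
  exact hM.inner_apply_single_zero_eq_zero hA.isSymmetric_toEuclideanLin (by simp [hj]) (by simp)

theorem CondM.apply_eq_zero_of_ne (hM : CondM A (lorentzCone n)) (hA : A.IsSymm)
    {k l : Fin (n + 1)} (hk : k ≠ 0) (hl : l ≠ 0) (hkl : k ≠ l) : A k l = 0 := by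
  rw [← inner_toEuclideanLin_single_single A k l]
  exact hM.inner_apply_eq_zero_of_inner_eq_zero hA.isSymmetric_toEuclideanLin (by simp [hl])
    (by simp [hk]) (by simp [EuclideanSpace.inner_single_left, hkl])

theorem CondM.apply_self_eq_apply_self (hM : CondM A (lorentzCone n)) (hA : A.IsSymm)
    {k l : Fin (n + 1)} (hk : k ≠ 0) (hl : l ≠ 0) : A k k = A l l := by
  rcases eq_or_ne k l with rfl | hkl
  · rfl
  have h := hM.inner_apply_eq_zero_of_inner_eq_zero hA.isSymmetric_toEuclideanLin
    (u := EuclideanSpace.single k 1 + EuclideanSpace.single l 1)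
    (w := EuclideanSpace.single k 1 - EuclideanSpace.single l 1)
    (by simp [hk, hl]) (by simp [hk, hl])
    (by simp [inner_add_left, inner_sub_right, EuclideanSpace.inner_single_left, hkl, hkl.symm])
  simp only [map_add, inner_add_left, inner_sub_right, inner_toEuclideanLin_single_single,
    hA.apply k l] at h
  linarith

theorem CondM.apply_zero_zero_le (hM : CondM A (lorentzCone n)) (j : Fin (n + 1)) :
    A 0 0 ≤ A j j := by
  rcases eq_or_ne j 0 with rfl | hj
  · rfl
  have h := hM (EuclideanSpace.single j 1) e₀ (by simp) (mem_lorentzCone_iff.2 (by simp))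
    (by simp) (by simp [EuclideanSpace.inner_single_left, hj])
  simpa [inner_toEuclideanLin_single_single] using h

theorem CondM.eq_diagonal (hM : CondM A (lorentzCone n)) (hA : A.IsSymm) :
    A = diagonal fun i => if i = 0 then A 0 0 else A (Fin.last n) (Fin.last n) := by
  ext i j
  rcases eq_or_ne i j with rfl | hij
  · rcases eq_or_ne i 0 with rfl | hi
    · simp
    have hlast : Fin.last n ≠ 0 := fun h => hi (le_antisymm (h ▸ Fin.le_last i) (Fin.zero_le i))
    simp [hi, hM.apply_self_eq_apply_self hA hi hlast]
  rw [diagonal_apply_ne _ hij]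
  rcases eq_or_ne i 0 with rfl | hi
  · exact hM.apply_zero_eq_zero hA hij.symm
  rcases eq_or_ne j 0 with rfl | hj
  · rw [← hA.apply]
    exact hM.apply_zero_eq_zero hA hi
  exact hM.apply_eq_zero_of_ne hA hi hj hij

end LorentzCone

theorem quadratic_spherical_stmt16_general (n : ℕ)
    (A : Matrix (Fin (n + 1)) (Fin (n + 1)) ℝ) (hA : A.IsSymm) :
    CondM A (lorentzCone n) ↔
      ∃ a lam : ℝ, a ≤ lam ∧
        A = Matrix.diagonal (fun i : Fin (n + 1) => if i = 0 then a else lam) := by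
  constructor
  · intro hM
    exact ⟨_, _, hM.apply_zero_zero_le _, hM.eq_diagonal hA⟩
  · rintro ⟨a, lam, hal, rfl⟩
    exact condM_diagonal_lorentzCone hal

/-- A symmetric matrix `A` satisfies condition (M) for the Lorentz cone iff
`A = diag(a, λ I)` for some `a ≤ λ`. (The ambient dimension is `n + 1 ≥ 2`.) -/
theorem quadratic_spherical_stmt16 (n : ℕ) (hn : 1 ≤ n)
    (A : Matrix (Fin (n + 1)) (Fin (n + 1)) ℝ) (hA : A.IsSymm) :
    CondM A (lorentzCone n) ↔
      ∃ a lam : ℝ, a ≤ lam ∧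
        A = Matrix.diagonal (fun i : Fin (n + 1) => if i = 0 then a else lam) :=
  quadratic_spherical_stmt16_general n A hA
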